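/- arXiv:2006.10814 — 7 statements merged into one kernel-verified Lean document; each statement's English description precedes it below -/
import Mathlib

section
/- There exists a constant c > 0 such that for every even integer n ≥ 2 there exists a row-stochastic matrix T whose rank is at most n(n−1)/2 + 1 but whose nonnegative rank is at least 2^{cn}. -/
open Finset

namespace Stmt1Aux

variable {α : Type*} [DecidableEq α]


variable {α : Type*} [DecidableEq α]

/-- indicator of a disjoint pair -/
def dInd (a b : Finset α) : ℕ := if a ∩ b = ∅ then 1 else 0

/-- number of disjoint pairs in the rectangle `A × B` -/
def dcount (A B : Finset (Finset α)) : ℕ := ∑ a ∈ A, ∑ b ∈ B, dInd a b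

lemma erase_inter_of_not_mem {x : α} {a b : Finset α} (hb : x ∉ b) :
    a.erase x ∩ b = a ∩ b := by
  ext y
  simp only [mem_inter, mem_erase]
  constructor
  · rintro ⟨⟨-, hy⟩, hyb⟩; exact ⟨hy, hyb⟩
  · rintro ⟨hya, hyb⟩
    exact ⟨⟨fun h => hb (h ▸ hyb), hya⟩, hyb⟩

lemma inter_erase_of_not_mem {x : α} {a b : Finset α} (ha : x ∉ a) :
    a ∩ b.erase x = a ∩ b := by
  rw [inter_comm, erase_inter_of_not_mem ha, inter_comm]

lemma dInd_erase_left {x : α} {a b : Finset α} (hb : x ∉ b) :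
    dInd (a.erase x) b = dInd a b := by
  unfold dInd; rw [erase_inter_of_not_mem hb]

lemma dInd_erase_right {x : α} {a b : Finset α} (ha : x ∉ a) :
    dInd a (b.erase x) = dInd a b := by
  unfold dInd; rw [inter_erase_of_not_mem ha]

lemma dInd_eq_zero {x : α} {a b : Finset α} (ha : x ∈ a) (hb : x ∈ b) :
    dInd a b = 0 := by
  unfold dInd
  rw [if_neg]
  intro h
  exact absurd (h ▸ mem_inter.mpr ⟨ha, hb⟩) (notMem_empty x)

lemma dcount_split (x : α) (A B : Finset (Finset α)) :
    dcount A B =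
      dcount (A.filter (fun a => x ∉ a)) (B.filter (fun b => x ∉ b))
      + dcount ((A.filter (fun a => x ∈ a)).image (fun a => a.erase x))
          (B.filter (fun b => x ∉ b))
      + dcount (A.filter (fun a => x ∉ a))
          ((B.filter (fun b => x ∈ b)).image (fun b => b.erase x)) := by
  classical
  have hinjA : ∀ a ∈ A.filter (fun a => x ∈ a), ∀ a' ∈ A.filter (fun a => x ∈ a),
      a.erase x = a'.erase x → a = a' := by
    intro a ha a' ha' h
    have hxa : x ∈ a := (mem_filter.mp ha).2
    have hxa' : x ∈ a' := (mem_filter.mp ha').2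
    rw [← insert_erase hxa, ← insert_erase hxa', h]
  have hinjB : ∀ b ∈ B.filter (fun b => x ∈ b), ∀ b' ∈ B.filter (fun b => x ∈ b),
      b.erase x = b'.erase x → b = b' := by
    intro b hb b' hb' h
    have hxb : x ∈ b := (mem_filter.mp hb).2
    have hxb' : x ∈ b' := (mem_filter.mp hb').2
    rw [← insert_erase hxb, ← insert_erase hxb', h]
  -- rewrite images
  have h10 : dcount ((A.filter (fun a => x ∈ a)).image (fun a => a.erase x))
      (B.filter (fun b => x ∉ b)) = dcount (A.filter (fun a => x ∈ a)) (B.filter (fun b => x ∉ b)) := by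
    unfold dcount
    rw [Finset.sum_image hinjA]
    refine Finset.sum_congr rfl fun a _ => Finset.sum_congr rfl fun b hb => ?_
    exact dInd_erase_left (mem_filter.mp hb).2
  have h01 : dcount (A.filter (fun a => x ∉ a))
      ((B.filter (fun b => x ∈ b)).image (fun b => b.erase x))
      = dcount (A.filter (fun a => x ∉ a)) (B.filter (fun b => x ∈ b)) := by
    unfold dcount
    refine Finset.sum_congr rfl fun a ha => ?_
    rw [Finset.sum_image hinjB]
    exact Finset.sum_congr rfl fun b _ => dInd_erase_right (mem_filter.mp ha).2
  have h11 : dcount (A.filter (fun a => x ∈ a)) (B.filter (fun b => x ∈ b)) = 0 := by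
    refine Finset.sum_eq_zero fun a ha => Finset.sum_eq_zero fun b hb => ?_
    exact dInd_eq_zero (mem_filter.mp ha).2 (mem_filter.mp hb).2
  have hsplitB : ∀ X : Finset (Finset α),
      dcount X B = dcount X (B.filter (fun b => x ∈ b)) + dcount X (B.filter (fun b => x ∉ b)) := by
    intro X
    unfold dcount
    rw [← Finset.sum_add_distrib]
    exact Finset.sum_congr rfl fun a _ =>
      (Finset.sum_filter_add_sum_filter_not B (fun b => x ∈ b) _).symm
  have hsplitA : ∀ Y : Finset (Finset α),
      (∑ a ∈ A, ∑ b ∈ Y, dInd a b)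
        = dcount (A.filter (fun a => x ∈ a)) Y + dcount (A.filter (fun a => x ∉ a)) Y :=
    fun Y => (Finset.sum_filter_add_sum_filter_not A (fun a => x ∈ a) _).symm
  have e1 : dcount A B = dcount (A.filter (fun a => x ∈ a)) B
      + dcount (A.filter (fun a => x ∉ a)) B := hsplitA B
  rw [e1, hsplitB (A.filter (fun a => x ∈ a)), hsplitB (A.filter (fun a => x ∉ a)),
    h11, h10, h01]
  omega

lemma dcount_union_inter_left (X X' Y : Finset (Finset α)) :
    dcount (X ∪ X') Y + dcount (X ∩ X') Y = dcount X Y + dcount X' Y := by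
  unfold dcount
  exact Finset.sum_union_inter

lemma dcount_union_inter_right (X Y Y' : Finset (Finset α)) :
    dcount X (Y ∪ Y') + dcount X (Y ∩ Y') = dcount X Y + dcount X Y' := by
  unfold dcount
  rw [← Finset.sum_add_distrib, ← Finset.sum_add_distrib]
  exact Finset.sum_congr rfl fun a _ => Finset.sum_union_inter

lemma dcount_submod {X' X Y' Y : Finset (Finset α)} (hX : X' ⊆ X) (hY : Y' ⊆ Y) :
    dcount X' Y + dcount X Y' ≤ dcount X Y + dcount X' Y' := by
  unfold dcount
  rw [← Finset.sum_sdiff (f := fun a => ∑ b ∈ Y, dInd a b) hX,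
    ← Finset.sum_sdiff (f := fun a => ∑ b ∈ Y', dInd a b) hX]
  have h : ∑ a ∈ X \ X', ∑ b ∈ Y', dInd a b ≤ ∑ a ∈ X \ X', ∑ b ∈ Y, dInd a b :=
    Finset.sum_le_sum fun a _ =>
      Finset.sum_le_sum_of_subset hY
  omega

/-- The Kaibel–Weltge rectangle bound. -/
lemma kw_bound (s : Finset α) (A B : Finset (Finset α))
    (hA : ∀ a ∈ A, a ⊆ s) (hB : ∀ b ∈ B, b ⊆ s)
    (hval : ∀ a ∈ A, ∀ b ∈ B, (a ∩ b).card ≠ 1) :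
    dcount A B ≤ 2 ^ s.card := by
  classical
  induction s using Finset.induction_on generalizing A B with
  | empty =>
    have hA1 : A ⊆ {∅} := fun a ha => by
      simpa using subset_empty.mp (hA a ha)
    have hB1 : B ⊆ {∅} := fun b hb => by
      simpa using subset_empty.mp (hB b hb)
    calc dcount A B ≤ ∑ a ∈ A, ∑ b ∈ B, 1 :=
          Finset.sum_le_sum fun a _ => Finset.sum_le_sum fun b _ => by
            unfold dInd; split <;> omega
      _ = A.card * B.card := by simp [mul_comm]
      _ ≤ 1 := by
          have := Finset.card_le_card hA1
          have := Finset.card_le_card hB1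
          simp only [card_singleton] at *
          nlinarith
      _ ≤ 2 ^ (∅ : Finset α).card := by simp
  | @insert x s' hx ih =>
    set A0 := A.filter (fun a => x ∉ a) with hA0
    set A1 := (A.filter (fun a => x ∈ a)).image (fun a => a.erase x) with hA1
    set B0 := B.filter (fun b => x ∉ b) with hB0
    set B1 := (B.filter (fun b => x ∈ b)).image (fun b => b.erase x) with hB1
    -- memberships
    have hmemA0 : ∀ a ∈ A0, a ∈ A ∧ x ∉ a := fun a ha => mem_filter.mp ha
    have hmemB0 : ∀ b ∈ B0, b ∈ B ∧ x ∉ b := fun b hb => mem_filter.mp hb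
    have hmemA1 : ∀ a ∈ A1, x ∉ a ∧ insert x a ∈ A := by
      intro a ha
      obtain ⟨a0, ha0, rfl⟩ := mem_image.mp ha
      have hxa0 : x ∈ a0 := (mem_filter.mp ha0).2
      refine ⟨notMem_erase x a0, ?_⟩
      rw [insert_erase hxa0]
      exact (mem_filter.mp ha0).1
    have hmemB1 : ∀ b ∈ B1, x ∉ b ∧ insert x b ∈ B := by
      intro b hb
      obtain ⟨b0, hb0, rfl⟩ := mem_image.mp hb
      have hxb0 : x ∈ b0 := (mem_filter.mp hb0).2
      refine ⟨notMem_erase x b0, ?_⟩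
      rw [insert_erase hxb0]
      exact (mem_filter.mp hb0).1
    -- subsets of s'
    have hsubA0 : ∀ a ∈ A0, a ⊆ s' := by
      intro a ha y hy
      have h1 := hA a (hmemA0 a ha).1 hy
      rcases mem_insert.mp h1 with h | h
      · exact absurd (h ▸ hy) (hmemA0 a ha).2
      · exact h
    have hsubB0 : ∀ b ∈ B0, b ⊆ s' := by
      intro b hb y hy
      have h1 := hB b (hmemB0 b hb).1 hy
      rcases mem_insert.mp h1 with h | h
      · exact absurd (h ▸ hy) (hmemB0 b hb).2
      · exact h
    have hsubA1 : ∀ a ∈ A1, a ⊆ s' := by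
      intro a ha y hy
      obtain ⟨hxa, hins⟩ := hmemA1 a ha
      have h1 := hA _ hins (mem_insert_of_mem hy)
      rcases mem_insert.mp h1 with h | h
      · exact absurd (h ▸ hy) hxa
      · exact h
    have hsubB1 : ∀ b ∈ B1, b ⊆ s' := by
      intro b hb y hy
      obtain ⟨hxb, hins⟩ := hmemB1 b hb
      have h1 := hB _ hins (mem_insert_of_mem hy)
      rcases mem_insert.mp h1 with h | h
      · exact absurd (h ▸ hy) hxb
      · exact h
    -- validity of the two combined rectangles
    have hvalA : ∀ a ∈ A0 ∪ A1, ∀ b ∈ B0, (a ∩ b).card ≠ 1 := by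
      intro a ha b hb
      rcases mem_union.mp ha with h | h
      · exact hval a (hmemA0 a h).1 b (hmemB0 b hb).1
      · obtain ⟨hxa, hins⟩ := hmemA1 a h
        have : insert x a ∩ b = a ∩ b := by
          rw [← erase_inter_of_not_mem (x := x) (a := insert x a) (hmemB0 b hb).2,
            erase_insert hxa]
        rw [← this]
        exact hval _ hins b (hmemB0 b hb).1
    have hvalB : ∀ a ∈ A0, ∀ b ∈ B0 ∪ B1, (a ∩ b).card ≠ 1 := by
      intro a ha b hb
      rcases mem_union.mp hb with h | h
      · exact hval a (hmemA0 a ha).1 b (hmemB0 b h).1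
      · obtain ⟨hxb, hins⟩ := hmemB1 b h
        have : a ∩ insert x b = a ∩ b := by
          rw [← inter_erase_of_not_mem (x := x) (b := insert x b) (hmemA0 a ha).2,
            erase_insert hxb]
        rw [← this]
        exact hval a (hmemA0 a ha).1 _ hins
    -- the intersection rectangle has no disjoint pairs
    have hzero : dcount (A0 ∩ A1) (B0 ∩ B1) = 0 := by
      refine Finset.sum_eq_zero fun a ha => Finset.sum_eq_zero fun b hb => ?_
      have haA := hmemA0 a (mem_of_mem_inter_left ha)
      have haA1 := hmemA1 a (mem_of_mem_inter_right ha)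
      have hbB := hmemB0 b (mem_of_mem_inter_left hb)
      have hbB1 := hmemB1 b (mem_of_mem_inter_right hb)
      unfold dInd
      rw [if_neg]
      intro hdisj
      have hcard : (insert x a ∩ insert x b).card = 1 := by
        rw [← insert_inter_distrib, hdisj]
        simp
      exact hval _ haA1.2 _ hbB1.2 hcard
    -- put everything together
    have hsplit : dcount A B = dcount A0 B0 + dcount A1 B0 + dcount A0 B1 :=
      dcount_split x A B
    have hu1 := dcount_union_inter_left A0 A1 B0
    have hu2 := dcount_union_inter_right A0 B0 B1
    have hsub := dcount_submod (X' := A0 ∩ A1) (X := A0) (Y' := B0 ∩ B1) (Y := B0)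
      (inter_subset_left) (inter_subset_left)
    have hih1 : dcount (A0 ∪ A1) B0 ≤ 2 ^ s'.card := by
      apply ih
      · intro a ha
        rcases mem_union.mp ha with h | h
        · exact hsubA0 a h
        · exact hsubA1 a h
      · exact hsubB0
      · exact hvalA
    have hih2 : dcount A0 (B0 ∪ B1) ≤ 2 ^ s'.card := by
      apply ih
      · exact hsubA0
      · intro b hb
        rcases mem_union.mp hb with h | h
        · exact hsubB0 b h
        · exact hsubB1 b h
      · exact hvalB
    have hcards : (insert x s').card = s'.card + 1 := card_insert_of_notMem hx
    rw [hcards, pow_succ]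
    omega

/-- the total number of disjoint pairs of subsets of `s` is `3 ^ |s|`. -/
lemma dcount_powerset (s : Finset α) :
    dcount s.powerset s.powerset = 3 ^ s.card := by
  classical
  induction s using Finset.induction_on with
  | empty => simp [dcount, dInd]
  | @insert x s' hx ih =>
    have hfilt0 : (insert x s').powerset.filter (fun a => x ∉ a) = s'.powerset := by
      ext a
      simp only [mem_filter, mem_powerset]
      constructor
      · rintro ⟨hsub, hxa⟩ y hy
        rcases mem_insert.mp (hsub hy) with h | h
        · exact absurd (h ▸ hy) hxa
        · exact h
      · intro hsub
        exact ⟨hsub.trans (subset_insert x s'), fun hxa => hx (hsub hxa)⟩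
    have hfilt1 : ((insert x s').powerset.filter (fun a => x ∈ a)).image (fun a => a.erase x)
        = s'.powerset := by
      ext a
      simp only [mem_image, mem_filter, mem_powerset]
      constructor
      · rintro ⟨a0, ⟨hsub, hxa0⟩, rfl⟩
        intro y hy
        have hy' := mem_of_mem_erase hy
        rcases mem_insert.mp (hsub hy') with h | h
        · exact absurd h (ne_of_mem_erase hy)
        · exact h
      · intro hsub
        refine ⟨insert x a, ⟨insert_subset_insert x hsub, mem_insert_self x a⟩, ?_⟩
        rw [erase_insert (fun hxa => hx (hsub hxa))]
    have := dcount_split x (insert x s').powerset (insert x s').powerset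
    rw [hfilt0, hfilt1] at this
    rw [this, ih, card_insert_of_notMem hx, pow_succ]
    ring

lemma dcount_eq_card (A B : Finset (Finset α)) :
    dcount A B = ((A ×ˢ B).filter (fun p => p.1 ∩ p.2 = ∅)).card := by
  rw [Finset.card_filter, Finset.sum_product]
  rfl



/-- indicator vector -/
def chi {m : ℕ} (a : Finset (Fin m)) (i : Fin m) : ℝ := if i ∈ a then 1 else 0

lemma chi_mul_chi {m : ℕ} (a b : Finset (Fin m)) (i : Fin m) :
    chi a i * chi b i = if i ∈ a ∩ b then (1:ℝ) else 0 := by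
  by_cases ha : i ∈ a <;> by_cases hb : i ∈ b <;>
    simp [chi, ha, hb, Finset.mem_inter]

lemma card_inter_eq_sum {m : ℕ} (a b : Finset (Fin m)) :
    (((a ∩ b).card : ℝ)) = ∑ i, chi a i * chi b i := by
  rw [Finset.sum_congr rfl fun i _ => chi_mul_chi a b i, Finset.sum_boole]
  have : Finset.filter (fun x => x ∈ a ∩ b) univ = a ∩ b := by
    ext x; simp
  rw [this]

/-- the basic matrix -/
noncomputable def MM (m : ℕ) : Matrix (Finset (Fin m)) (Finset (Fin m)) ℝ :=
  fun a b => ((1 : ℝ) - (a ∩ b).card) ^ 2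

lemma MM_nonneg (m : ℕ) (a b : Finset (Fin m)) : 0 ≤ MM m a b := sq_nonneg _

lemma MM_empty (m : ℕ) (a : Finset (Fin m)) : MM m a ∅ = 1 := by
  simp [MM]

noncomputable def srow (m : ℕ) (a : Finset (Fin m)) : ℝ := ∑ b, MM m a b

lemma srow_pos (m : ℕ) (a : Finset (Fin m)) : 0 < srow m a := by
  have h1 : MM m a ∅ ≤ srow m a :=
    Finset.single_le_sum (fun b _ => MM_nonneg m a b) (mem_univ ∅)
  rw [MM_empty] at h1
  linarith

noncomputable def TT (m : ℕ) : Matrix (Finset (Fin m)) (Finset (Fin m)) ℝ :=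
  fun a b => MM m a b / srow m a

lemma TT_nonneg (m : ℕ) (a b : Finset (Fin m)) : 0 ≤ TT m a b :=
  div_nonneg (MM_nonneg m a b) (srow_pos m a).le

lemma TT_row_sum (m : ℕ) (a : Finset (Fin m)) : ∑ b, TT m a b = 1 := by
  unfold TT
  rw [← Finset.sum_div]
  exact div_self (srow_pos m a).ne'

lemma TT_eq_zero (m : ℕ) (a b : Finset (Fin m)) (h : (a ∩ b).card = 1) :
    TT m a b = 0 := by
  unfold TT MM
  rw [h]
  norm_num

lemma TT_pos_of_disjoint (m : ℕ) (a b : Finset (Fin m)) (h : a ∩ b = ∅) :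
    0 < TT m a b := by
  unfold TT MM
  rw [h]
  simp only [Finset.card_empty, Nat.cast_zero, sub_zero, one_pow]
  exact div_pos one_pos (srow_pos m a)

/-- inner index type for the low-rank factorization -/
abbrev K (m : ℕ) := Unit ⊕ (Fin m ⊕ (Fin m × Fin m))

lemma card_K (m : ℕ) : Fintype.card (K m) = 1 + (m + m * m) := by
  simp [Fintype.card_sum, Fintype.card_prod]

noncomputable def FF (m : ℕ) : Matrix (Finset (Fin m)) (K m) ℝ :=
  fun a k =>
    (Sum.elim (fun _ => (1:ℝ))
      (Sum.elim (fun i => (-2) * chi a i)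
        (fun p => chi a p.1 * chi a p.2)) k) / srow m a

def GG (m : ℕ) : Matrix (K m) (Finset (Fin m)) ℝ :=
  fun k b =>
    Sum.elim (fun _ => (1:ℝ))
      (Sum.elim (fun i => chi b i)
        (fun p => chi b p.1 * chi b p.2)) k

lemma TT_factor (m : ℕ) (a b : Finset (Fin m)) :
    TT m a b = ∑ k : K m, FF m a k * GG m k b := by
  have hs := (srow_pos m a).ne'
  set t : ℝ := ∑ i, chi a i * chi b i with ht
  have hsum : ∑ k : K m, FF m a k * GG m k b = (1 + (-2) * t + t * t) / srow m a := by
    rw [Fintype.sum_sum_type, Fintype.sum_sum_type]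
    have h0 : ∑ u : Unit, FF m a (Sum.inl u) * GG m (Sum.inl u) b = 1 / srow m a := by
      simp [FF, GG]
    have h1 : ∑ i : Fin m, FF m a (Sum.inr (Sum.inl i)) * GG m (Sum.inr (Sum.inl i)) b
        = ((-2) * t) / srow m a := by
      simp only [FF, GG, Sum.elim_inr, Sum.elim_inl]
      rw [ht, Finset.mul_sum, Finset.sum_div]
      refine Finset.sum_congr rfl fun i _ => ?_
      ring
    have h2 : ∑ p : Fin m × Fin m,
        FF m a (Sum.inr (Sum.inr p)) * GG m (Sum.inr (Sum.inr p)) b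
        = (t * t) / srow m a := by
      simp only [FF, GG, Sum.elim_inr]
      rw [ht, Finset.sum_mul_sum, Fintype.sum_prod_type, Finset.sum_div]
      refine Finset.sum_congr rfl fun i _ => ?_
      rw [Finset.sum_div]
      refine Finset.sum_congr rfl fun j _ => ?_
      ring
    rw [h0, h1, h2]
    field_simp
    ring
  rw [hsum]
  unfold TT MM
  rw [card_inter_eq_sum, ← ht]
  congr 1
  ring



theorem key (m : ℕ) : ∃ T : Matrix (Fin (2^m)) (Fin (2^m)) ℝ,
    (∀ i j, 0 ≤ T i j) ∧ (∀ i, ∑ j, T i j = 1) ∧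
    T.rank ≤ 1 + (m + m * m) ∧ T.rank ≤ 2 ^ m ∧
    ∀ (r : ℕ) (U : Matrix (Fin (2^m)) (Fin r) ℝ) (V : Matrix (Fin r) (Fin (2^m)) ℝ),
      (∀ i k, 0 ≤ U i k) → (∀ k j, 0 ≤ V k j) → T = U * V →
      3 ^ m ≤ r * 2 ^ m := by
  classical
  have hcard : Fintype.card (Finset (Fin m)) = 2 ^ m := by
    simp [Fintype.card_finset]
  let e : Finset (Fin m) ≃ Fin (2 ^ m) := Fintype.equivFinOfCardEq hcard
  refine ⟨fun i j => TT m (e.symm i) (e.symm j), fun i j => TT_nonneg _ _ _, ?_, ?_, ?_, ?_⟩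
  · -- row sums
    intro i
    rw [Equiv.sum_comp e.symm (fun b => TT m (e.symm i) b)]
    exact TT_row_sum m (e.symm i)
  · -- rank via factorization
    have hT : (fun i j => TT m (e.symm i) (e.symm j))
        = (Matrix.of fun i k => FF m (e.symm i) k) * (Matrix.of fun k j => GG m k (e.symm j)) := by
      funext i j
      rw [Matrix.mul_apply]
      exact TT_factor m (e.symm i) (e.symm j)
    rw [hT]
    refine (Matrix.rank_mul_le_left _ _).trans ?_
    exact (Matrix.rank_le_card_width _).trans (le_of_eq (card_K m))
  · -- rank ≤ 2^m
    exact (Matrix.rank_le_card_width _).trans (le_of_eq (Fintype.card_fin _))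
  · -- nonnegative rank
    intro r U V hU hV hTUV
    set Ak : Fin r → Finset (Finset (Fin m)) :=
      fun k => univ.filter (fun a => 0 < U (e a) k) with hAk
    set Bk : Fin r → Finset (Finset (Fin m)) :=
      fun k => univ.filter (fun b => 0 < V k (e b)) with hBk
    have hentry : ∀ a b, TT m a b = ∑ k, U (e a) k * V k (e b) := by
      intro a b
      have h := congrFun (congrFun hTUV (e a)) (e b)
      simpa [Matrix.mul_apply, Equiv.symm_apply_apply] using h
    have hval : ∀ k, ∀ a ∈ Ak k, ∀ b ∈ Bk k, (a ∩ b).card ≠ 1 := by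
      intro k a ha b hb hcard1
      have h0 : TT m a b = 0 := TT_eq_zero m a b hcard1
      have hpos : 0 < U (e a) k * V k (e b) :=
        mul_pos (mem_filter.mp ha).2 (mem_filter.mp hb).2
      have hle : U (e a) k * V k (e b) ≤ ∑ k', U (e a) k' * V k' (e b) :=
        Finset.single_le_sum (f := fun k' => U (e a) k' * V k' (e b))
          (fun k' _ => mul_nonneg (hU _ _) (hV _ _)) (mem_univ k)
      rw [← hentry a b, h0] at hle
      linarith
    have hbound : ∀ k, dcount (Ak k) (Bk k) ≤ 2 ^ m := by
      intro k
      have h := kw_bound (univ : Finset (Fin m)) (Ak k) (Bk k)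
        (fun a _ => subset_univ a) (fun b _ => subset_univ b) (hval k)
      simpa using h
    have hcover : ((univ ×ˢ univ : Finset (Finset (Fin m) × Finset (Fin m))).filter
        (fun p => p.1 ∩ p.2 = ∅)) ⊆ univ.biUnion (fun k : Fin r =>
          ((Ak k ×ˢ Bk k).filter (fun p => p.1 ∩ p.2 = ∅))) := by
      intro p hp
      obtain ⟨-, hdisj⟩ := mem_filter.mp hp
      have hpos : 0 < TT m p.1 p.2 := TT_pos_of_disjoint m p.1 p.2 hdisj
      rw [hentry p.1 p.2] at hpos
      obtain ⟨k, -, hk⟩ := Finset.exists_ne_zero_of_sum_ne_zero hpos.ne'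
      have hkU : 0 < U (e p.1) k := by
        have h1 : U (e p.1) k ≠ 0 := fun h => hk (by rw [h, zero_mul])
        exact lt_of_le_of_ne (hU _ _) (Ne.symm h1)
      have hkV : 0 < V k (e p.2) := by
        have h1 : V k (e p.2) ≠ 0 := fun h => hk (by rw [h, mul_zero])
        exact lt_of_le_of_ne (hV _ _) (Ne.symm h1)
      exact mem_biUnion.mpr ⟨k, mem_univ k, mem_filter.mpr
        ⟨mem_product.mpr ⟨mem_filter.mpr ⟨mem_univ _, hkU⟩,
          mem_filter.mpr ⟨mem_univ _, hkV⟩⟩, hdisj⟩⟩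
    have h3m : 3 ^ m
        = ((univ ×ˢ univ : Finset (Finset (Fin m) × Finset (Fin m))).filter
            (fun p => p.1 ∩ p.2 = ∅)).card := by
      have h := dcount_powerset (univ : Finset (Fin m))
      rw [dcount_eq_card, powerset_univ] at h
      rw [h]
      simp
    calc 3 ^ m
        = ((univ ×ˢ univ : Finset (Finset (Fin m) × Finset (Fin m))).filter
            (fun p => p.1 ∩ p.2 = ∅)).card := h3m
      _ ≤ (univ.biUnion (fun k : Fin r =>
            ((Ak k ×ˢ Bk k).filter (fun p => p.1 ∩ p.2 = ∅)))).card :=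
          Finset.card_le_card hcover
      _ ≤ ∑ k : Fin r, ((Ak k ×ˢ Bk k).filter (fun p => p.1 ∩ p.2 = ∅)).card :=
          Finset.card_biUnion_le
      _ = ∑ k : Fin r, dcount (Ak k) (Bk k) := by
          exact Finset.sum_congr rfl fun k _ => (dcount_eq_card _ _).symm
      _ ≤ ∑ _k : Fin r, 2 ^ m := Finset.sum_le_sum fun k _ => hbound k
      _ = r * 2 ^ m := by simp [mul_comm]


end Stmt1Aux

/-- There is a constant `c > 0` such that for every even `n ≥ 2` there is a
row-stochastic matrix of rank at most `n(n-1)/2 + 1` whose nonnegative rank is at least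
`2^(c n)`: any entrywise-nonnegative factorization `T = U * V` with inner dimension `r`
must have `2^(c n) ≤ r`. -/
theorem stmt1 : ∃ c : ℝ, 0 < c ∧ ∀ n : ℕ, Even n → 2 ≤ n →
    ∃ (p q : ℕ) (T : Matrix (Fin p) (Fin q) ℝ),
      (∀ i j, 0 ≤ T i j) ∧
      (∀ i, ∑ j, T i j = 1) ∧
      T.rank ≤ n * (n - 1) / 2 + 1 ∧
      ∀ (r : ℕ) (U : Matrix (Fin p) (Fin r) ℝ) (V : Matrix (Fin r) (Fin q) ℝ),
        (∀ i k, 0 ≤ U i k) → (∀ k j, 0 ≤ V k j) → T = U * V →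
        (2 : ℝ) ^ (c * n) ≤ r := by
  refine ⟨Real.logb 2 (3/2) / 2, by
    have h := Real.logb_pos (by norm_num : (1:ℝ) < 2) (by norm_num : (1:ℝ) < 3/2)
    linarith, ?_⟩
  intro n hev hn2
  obtain ⟨m, rfl⟩ := hev
  have hm1 : 1 ≤ m := by omega
  obtain ⟨T, hnn, hrow, hrank1, hrank2, hnr⟩ := Stmt1Aux.key m
  refine ⟨2 ^ m, 2 ^ m, T, hnn, hrow, ?_, ?_⟩
  · -- rank bound
    rcases eq_or_lt_of_le hm1 with h1 | h2
    · -- m = 1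
      have hm : m = 1 := h1.symm
      subst hm
      exact hrank2.trans (by norm_num)
    · -- m ≥ 2
      refine hrank1.trans ?_
      obtain ⟨k, rfl⟩ : ∃ k, m = k + 2 := ⟨m - 2, by omega⟩
      have hsub : k + 2 + (k + 2) - 1 = 2 * k + 3 := by omega
      rw [hsub]
      have h2 : (k + 2 + (k + 2)) * (2 * k + 3) = 2 * ((k + 2) * (2 * k + 3)) := by ring
      rw [h2, Nat.mul_div_cancel_left _ (by norm_num : 0 < 2)]
      nlinarith
  · intro r U V hU hV hTUV
    have h3 := hnr r U V hU hV hTUV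
    have hr : ((3:ℝ)/2) ^ m ≤ (r : ℝ) := by
      have hc : ((3:ℝ)) ^ m ≤ (r : ℝ) * 2 ^ m := by exact_mod_cast h3
      rw [div_pow, div_le_iff₀ (by positivity)]
      linarith
    have hexp : (2:ℝ) ^ (Real.logb 2 (3/2) / 2 * ((m + m : ℕ) : ℝ)) = ((3:ℝ)/2) ^ m := by
      have hn : (((m + m : ℕ)) : ℝ) = 2 * m := by push_cast; ring
      rw [hn]
      have hmul : Real.logb 2 (3/2) / 2 * (2 * (m:ℝ)) = Real.logb 2 (3/2) * (m:ℝ) := by ring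
      rw [hmul, Real.rpow_mul (by norm_num),
        Real.rpow_logb (by norm_num) (by norm_num) (by norm_num), Real.rpow_natCast]
    rw [hexp]
    exact hr
end

section
/- Let (S, 𝒮) be a measurable space, D an S-valued random variable, F a finite nonempty set, and L : F × S → ℝ such that for each f ∈ F the function s ↦ exp(L(f, s)) is measurable and has finite expectation Z(f) := E[exp(L(f, D))] with Z(f) > 0. Let f̂ : S → F be any measurable estimator. Then E[ exp( L(f̂(D), D) − log Z(f̂(D)) − log |F| ) ] ≤ 1. -/
open MeasureTheory

/-- **decoupling inequality, Lemma C.1.** For a random variable `D`, a finite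
class `F`, a loss `L : F × S → ℝ` with finite positive moment generating values
`Z f = E[exp (L f D)]`, and any estimator `f̂ : S → F`,
`E[exp (L (f̂ D) D - log (Z (f̂ D)) - log |F|)] ≤ 1`. -/
theorem stmt6 {Ω S : Type*} [MeasurableSpace Ω] [MeasurableSpace S]
    (P : Measure Ω) [IsProbabilityMeasure P]
    (D : Ω → S) (hD : Measurable D)
    (F : Type*) [Fintype F] [Nonempty F] [MeasurableSpace F] [MeasurableSingletonClass F]
    (L : F → S → ℝ)
    (hLmeas : ∀ f : F, Measurable fun s => Real.exp (L f s))
    (hLint : ∀ f : F, Integrable (fun ω => Real.exp (L f (D ω))) P)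
    (Z : F → ℝ) (hZ : ∀ f : F, Z f = ∫ ω, Real.exp (L f (D ω)) ∂P)
    (hZpos : ∀ f : F, 0 < Z f)
    (fhat : S → F) (hfhat : Measurable fhat) :
    ∫ ω, Real.exp (L (fhat (D ω)) (D ω) - Real.log (Z (fhat (D ω)))
        - Real.log (Fintype.card F)) ∂P ≤ 1 := by
  have hcard : (0:ℝ) < Fintype.card F := by
    exact_mod_cast Fintype.card_pos
  -- rewrite the integrand
  have hrw : ∀ x : S, Real.exp (L (fhat x) x - Real.log (Z (fhat x))
      - Real.log (Fintype.card F))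
      = Real.exp (L (fhat x) x) / (Z (fhat x) * (Fintype.card F : ℝ)) := by
    intro x
    rw [Real.exp_sub, Real.exp_sub, Real.exp_log (hZpos _), Real.exp_log hcard,
      div_div, mul_comm]
  -- the dominating function
  set g : Ω → ℝ := fun ω => ∑ f : F, Real.exp (L f (D ω)) / (Z f * (Fintype.card F : ℝ))
    with hg
  have hint : ∀ f : F, Integrable
      (fun ω => Real.exp (L f (D ω)) / (Z f * (Fintype.card F : ℝ))) P :=
    fun f => (hLint f).div_const _
  have hgint : Integrable g P := integrable_finset_sum _ fun f _ => hint f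
  have hle : ∀ ω, Real.exp (L (fhat (D ω)) (D ω) - Real.log (Z (fhat (D ω)))
      - Real.log (Fintype.card F)) ≤ g ω := by
    intro ω
    rw [hrw]
    exact Finset.single_le_sum (f := fun f => Real.exp (L f (D ω)) / (Z f * (Fintype.card F : ℝ)))
      (fun f _ => div_nonneg (Real.exp_pos _).le (mul_pos (hZpos f) hcard).le) (Finset.mem_univ _)
  have hmono : ∫ ω, Real.exp (L (fhat (D ω)) (D ω) - Real.log (Z (fhat (D ω)))
      - Real.log (Fintype.card F)) ∂P ≤ ∫ ω, g ω ∂P :=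
    integral_mono_of_nonneg (Filter.Eventually.of_forall fun ω => (Real.exp_pos _).le)
      hgint (Filter.Eventually.of_forall hle)
  have hgval : ∫ ω, g ω ∂P = 1 := by
    rw [hg]
    rw [integral_finset_sum _ fun f _ => hint f]
    have : ∀ f : F, (∫ ω, Real.exp (L f (D ω)) / (Z f * (Fintype.card F : ℝ)) ∂P)
        = 1 / (Fintype.card F : ℝ) := by
      intro f
      rw [integral_div, ← hZ f, div_mul_eq_div_div, div_self (hZpos f).ne']
    simp only [this, Finset.sum_const, Finset.card_univ, nsmul_eq_mul]
    field_simp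
  linarith [hmono, hgval.le, hgval.ge]
end

section
/- Let (S, 𝒮) be a measurable space, D an S-valued random variable, F a finite nonempty set, and L : F × S → ℝ such that for each f ∈ F the function s ↦ exp(L(f, s)) is measurable and has finite expectation Z(f) := E[exp(L(f, D))] with Z(f) > 0. Let f̂ : S → F be any measurable estimator and δ ∈ (0,1). Then with probability at least 1 − δ, −log Z(f̂(D)) ≤ −L(f̂(D), D) + log |F| + log(1/δ). -/
open MeasureTheory

lemma meas_select {Ω F : Type*} [MeasurableSpace Ω] [Fintype F] [MeasurableSpace F]
    [MeasurableSingletonClass F] (g : Ω → F) (hg : Measurable g) (h : F → Ω → ℝ)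
    (hh : ∀ f, Measurable (h f)) : Measurable (fun ω => h (g ω) ω) := by
  classical
  have heq : (fun ω => h (g ω) ω) = fun ω => ∑ f : F, if g ω = f then h f ω else 0 := by
    funext ω
    rw [Finset.sum_ite_eq Finset.univ (g ω) (fun f => h f ω)]
    simp
  rw [heq]
  exact Finset.measurable_sum _ fun f _ =>
    Measurable.ite (hg (measurableSet_singleton f)) (hh f) measurable_const

/-- **exponential tail bound from decoupling.** In the setting of the decoupling
inequality, for any `δ ∈ (0,1)`, with probability at least `1 - δ` over `D`,
`-log (Z (f̂ D)) ≤ -L (f̂ D) D + log |F| + log (1/δ)`. -/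
theorem stmt7 {Ω S : Type*} [MeasurableSpace Ω] [MeasurableSpace S]
    (P : Measure Ω) [IsProbabilityMeasure P]
    (D : Ω → S) (hD : Measurable D)
    (F : Type*) [Fintype F] [Nonempty F] [MeasurableSpace F] [MeasurableSingletonClass F]
    (L : F → S → ℝ)
    (hLmeas : ∀ f : F, Measurable fun s => Real.exp (L f s))
    (hLint : ∀ f : F, Integrable (fun ω => Real.exp (L f (D ω))) P)
    (Z : F → ℝ) (hZ : ∀ f : F, Z f = ∫ ω, Real.exp (L f (D ω)) ∂P)
    (hZpos : ∀ f : F, 0 < Z f)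
    (fhat : S → F) (hfhat : Measurable fhat)
    (δ : ℝ) (hδ : δ ∈ Set.Ioo (0 : ℝ) 1) :
    1 - δ ≤ (P {ω | -Real.log (Z (fhat (D ω))) ≤ -(L (fhat (D ω)) (D ω))
        + Real.log (Fintype.card F) + Real.log (1 / δ)}).toReal := by
  obtain ⟨hδ0, hδ1⟩ := hδ
  set n : ℝ := (Fintype.card F : ℝ) with hn
  have hn0 : 0 < n := by positivity
  set c : ℝ := n / δ with hc
  have hc0 : 0 < c := by positivity
  set W : Ω → ℝ := fun ω => Real.exp (L (fhat (D ω)) (D ω)) / Z (fhat (D ω)) with hW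
  have hWpos : ∀ ω, 0 < W ω := fun ω => div_pos (Real.exp_pos _) (hZpos _)
  -- the good set is exactly {W ≤ c}
  have hset : {ω | -Real.log (Z (fhat (D ω))) ≤ -(L (fhat (D ω)) (D ω))
      + Real.log (Fintype.card F) + Real.log (1 / δ)} = {ω | W ω ≤ c} := by
    ext ω
    simp only [Set.mem_setOf_eq]
    have hz := hZpos (fhat (D ω))
    have h1 : Real.log (W ω) = L (fhat (D ω)) (D ω) - Real.log (Z (fhat (D ω))) := by
      rw [hW]
      simp only
      rw [Real.log_div (by positivity) (ne_of_gt hz), Real.log_exp]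
    have h2 : Real.log c = Real.log n - Real.log δ := by
      rw [hc, Real.log_div (ne_of_gt hn0) (ne_of_gt hδ0)]
    have h3 : W ω ≤ c ↔ Real.log (W ω) ≤ Real.log c :=
      (Real.log_le_log_iff (hWpos ω) hc0).symm
    have h4 : Real.log (1 / δ) = -Real.log δ := by
      rw [one_div, Real.log_inv]
    rw [h3, ← hn]
    constructor <;> intro h <;> linarith
  rw [hset]
  -- measurability of W
  have hWmeas : Measurable W := by
    apply meas_select (fun ω => fhat (D ω)) (hfhat.comp hD)
      (fun f ω => Real.exp (L f (D ω)) / Z f)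
    intro f
    exact ((hLmeas f).comp hD).div measurable_const
  -- W bounded by the sum
  set Y : Ω → ℝ := fun ω => ∑ f : F, Real.exp (L f (D ω)) / Z f with hY
  have hWY : ∀ ω, W ω ≤ Y ω := by
    intro ω
    exact Finset.single_le_sum (f := fun f => Real.exp (L f (D ω)) / Z f)
      (fun f _ => div_nonneg (Real.exp_pos _).le (hZpos f).le) (Finset.mem_univ _)
  have hYint : Integrable Y P := integrable_finset_sum _ fun f _ => (hLint f).div_const _
  have hWint : Integrable W P := by
    refine hYint.mono hWmeas.aestronglyMeasurable (Filter.Eventually.of_forall fun ω => ?_)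
    rw [Real.norm_eq_abs, Real.norm_eq_abs, abs_of_pos (hWpos ω),
      abs_of_nonneg (le_trans (hWpos ω).le (hWY ω))]
    exact hWY ω
  have hYval : ∫ ω, Y ω ∂P = n := by
    rw [hY, integral_finset_sum _ (fun f _ => (hLint f).div_const _)]
    have h5 : ∀ f : F, ∫ ω, Real.exp (L f (D ω)) / Z f ∂P = 1 := by
      intro f
      rw [integral_div, ← hZ f, div_self (ne_of_gt (hZpos f))]
    simp [h5, hn]
  -- Markov
  have hmark : c * (P {ω | c ≤ W ω}).toReal ≤ n := by
    calc c * (P {ω | c ≤ W ω}).toReal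
        ≤ ∫ ω, W ω ∂P :=
          mul_meas_ge_le_integral_of_nonneg
            (Filter.Eventually.of_forall fun ω => (hWpos ω).le) hWint c
      _ ≤ ∫ ω, Y ω ∂P := integral_mono hWint hYint hWY
      _ = n := hYval
  have htail : (P {ω | c ≤ W ω}).toReal ≤ δ := by
    have h6 := (le_div_iff₀ hc0).mpr ((mul_comm _ c) ▸ hmark)
    have h7 : n / c = δ := by
      rw [hc]
      field_simp
    linarith [h6, h7.le, h7.ge]
  -- complement
  have hmeasgood : MeasurableSet {ω | W ω ≤ c} := hWmeas measurableSet_Iic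
  have hcompl : {ω | W ω ≤ c}ᶜ ⊆ {ω | c ≤ W ω} := by
    intro ω hω
    simp only [Set.mem_compl_iff, Set.mem_setOf_eq, not_le] at hω ⊢
    exact hω.le
  have hbad : (P {ω | W ω ≤ c}ᶜ).toReal ≤ δ :=
    le_trans (ENNReal.toReal_mono (measure_ne_top _ _) (measure_mono hcompl)) htail
  have h1' : (P {ω | W ω ≤ c}ᶜ).toReal = 1 - (P {ω | W ω ≤ c}).toReal := by
    rw [prob_compl_eq_one_sub hmeasgood,
      ENNReal.toReal_sub_of_le prob_le_one ENNReal.one_ne_top, ENNReal.toReal_one]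
  linarith [h1', hbad]
end

section
/- Let d ∈ ℕ, T ∈ ℕ, and let X_1, …, X_T be d × d real symmetric positive semidefinite matrices with tr(X_t) ≤ 1 for every t. Define M_0 = I_{d×d} and M_t = M_{t−1} + X_t for t = 1, …, T. Then ∑_{t=1}^T tr( X_t M_{t−1}^{−1} ) ≤ 2 d log(1 + T/d). -/
open Matrix
open scoped MatrixOrder

lemma trace_eq_sum_eig {d : ℕ} {A : Matrix (Fin d) (Fin d) ℝ} (hA : A.IsHermitian) :
    A.trace = ∑ i, hA.eigenvalues i := by
  conv_lhs => rw [hA.spectral_theorem]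
  rw [Unitary.conjStarAlgAut_apply, Matrix.trace_mul_comm, ← mul_assoc, Unitary.coe_star_mul_self, one_mul,
    Matrix.trace_diagonal]
  simp

lemma psd_trace_nonneg {d : ℕ} {A : Matrix (Fin d) (Fin d) ℝ} (hA : A.PosSemidef) :
    0 ≤ A.trace := by
  rw [trace_eq_sum_eig hA.1]
  exact Finset.sum_nonneg fun i _ => hA.eigenvalues_nonneg i

lemma trace_mul_nonneg {d : ℕ} {A B : Matrix (Fin d) (Fin d) ℝ} (hA : A.PosSemidef)
    (hB : B.PosSemidef) : 0 ≤ (A * B).trace := by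
  have h1 : A = CFC.sqrt A * CFC.sqrt A := (CFC.sqrt_mul_sqrt_self A hA.nonneg).symm
  have h2 : (A * B).trace = ((CFC.sqrt A)ᴴ * B * CFC.sqrt A).trace := by
    rw [(CFC.sqrt_nonneg A).posSemidef.1]
    conv_lhs => rw [h1, mul_assoc, Matrix.trace_mul_comm]
  rw [h2]
  exact psd_trace_nonneg (hB.conjTranspose_mul_mul_same (CFC.sqrt A))

lemma one_add_sum_le_prod {ι : Type*} (s : Finset ι) (f : ι → ℝ) (hf : ∀ i ∈ s, 0 ≤ f i) :
    1 + ∑ i ∈ s, f i ≤ ∏ i ∈ s, (1 + f i) := by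
  classical
  induction s using Finset.induction with
  | empty => simp
  | insert _ _ hx ih =>
    rename_i a t
    rw [Finset.sum_insert hx, Finset.prod_insert hx]
    have ha : 0 ≤ f a := hf a (Finset.mem_insert_self a t)
    have ht : ∀ i ∈ t, 0 ≤ f i := fun i hi => hf i (Finset.mem_insert_of_mem hi)
    have h1 := ih ht
    have h2 : 0 ≤ ∑ i ∈ t, f i := Finset.sum_nonneg ht
    nlinarith

lemma det_one_add_ge {d : ℕ} {A : Matrix (Fin d) (Fin d) ℝ} (hA : A.PosSemidef) :
    1 + A.trace ≤ (1 + A).det := by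
  set U : Matrix (Fin d) (Fin d) ℝ := (hA.1.eigenvectorUnitary : Matrix (Fin d) (Fin d) ℝ)
  set D : Matrix (Fin d) (Fin d) ℝ := Matrix.diagonal (RCLike.ofReal ∘ hA.1.eigenvalues)
  have hUU : U * star U = 1 := Unitary.coe_mul_star_self _
  have hdec : 1 + A = U * (1 + D) * star U := by
    conv_lhs => rw [hA.1.spectral_theorem, Unitary.conjStarAlgAut_apply]
    rw [mul_add, add_mul, mul_one, hUU]
  have hdet : (1 + A).det = ∏ i, (1 + hA.1.eigenvalues i) := by
    rw [hdec, Matrix.det_mul_right_comm, hUU, one_mul]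
    have : (1 : Matrix (Fin d) (Fin d) ℝ) + D =
        Matrix.diagonal (fun i => 1 + hA.1.eigenvalues i) := by
      rw [← Matrix.diagonal_one, Matrix.diagonal_add]
      rfl
    rw [this, Matrix.det_diagonal]
  rw [hdet, trace_eq_sum_eig hA.1]
  exact one_add_sum_le_prod _ _ (fun i _ => hA.eigenvalues_nonneg i)

lemma log_bound {s : ℝ} (h0 : 0 ≤ s) (h1 : s ≤ 1) : s ≤ 2 * Real.log (1 + s) := by
  have hpos : (0:ℝ) < 1 + s := by linarith
  have h2 := Real.log_le_sub_one_of_pos (inv_pos.2 hpos)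
  rw [Real.log_inv] at h2
  -- -log(1+s) ≤ (1+s)⁻¹ - 1
  have h3 : 1 - (1+s)⁻¹ ≤ Real.log (1+s) := by linarith
  have h4 : s / (1+s) = 1 - (1+s)⁻¹ := by field_simp; ring
  have h5 : s / 2 ≤ s / (1+s) := by
    apply div_le_div_of_nonneg_left h0 hpos (by linarith)
  linarith [h4 ▸ h5]

lemma step_lemma {d : ℕ} {M X : Matrix (Fin d) (Fin d) ℝ} (hM : M.PosDef)
    (hM1 : (M - 1).PosSemidef) (hX : X.PosSemidef) (htr : X.trace ≤ 1) :
    (X * M⁻¹).trace ≤ 2 * (Real.log (M + X).det - Real.log M.det) := by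
  have hMinv : M⁻¹.PosDef := hM.inv
  set S := CFC.sqrt M⁻¹ with hSdef
  have hS : S.PosSemidef := (CFC.sqrt_nonneg M⁻¹).posSemidef
  have hSS : S * S = M⁻¹ := CFC.sqrt_mul_sqrt_self M⁻¹ hMinv.posSemidef.nonneg
  have hdetS : IsUnit S.det := by
    have : S.det * S.det = M⁻¹.det := by rw [← Matrix.det_mul, hSS]
    have hne : S.det ≠ 0 := by
      intro h
      rw [h, mul_zero] at this
      exact hMinv.det_pos.ne' this.symm
    exact isUnit_iff_ne_zero.mpr hne
  have hSinv : S⁻¹ * S = 1 := Matrix.nonsing_inv_mul S hdetS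
  have hSinv' : S * S⁻¹ = 1 := Matrix.mul_nonsing_inv S hdetS
  set s := (X * M⁻¹).trace with hs
  -- trace identity: s = trace (Sᴴ X S) = trace (S X S)
  have htr1 : (Sᴴ * X * S).trace = s := by
    rw [hS.1, Matrix.trace_mul_comm, ← mul_assoc, hSS, Matrix.trace_mul_comm]
  have hA : (Sᴴ * X * S).PosSemidef := hX.conjTranspose_mul_mul_same S
  have hs0 : 0 ≤ s := by rw [← htr1]; exact psd_trace_nonneg hA
  -- s ≤ 1
  have hSMS : S * M * S = 1 := by
    have hMdet : IsUnit M.det := isUnit_iff_ne_zero.mpr hM.det_pos.ne'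
    have hMeq : M = S⁻¹ * S⁻¹ := by
      have h' : M⁻¹⁻¹ = S⁻¹ * S⁻¹ := by rw [← hSS, Matrix.mul_inv_rev]
      rwa [Matrix.nonsing_inv_nonsing_inv M hMdet] at h'
    rw [hMeq, ← mul_assoc, hSinv', one_mul, hSinv]
  have hone_sub : ((1 : Matrix (Fin d) (Fin d) ℝ) - M⁻¹) = Sᴴ * (M - 1) * S := by
    rw [hS.1, mul_sub, sub_mul, hSMS, mul_one, hSS]
  have hs1 : s ≤ 1 := by
    have hpsd : ((1 : Matrix (Fin d) (Fin d) ℝ) - M⁻¹).PosSemidef := by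
      rw [hone_sub]; exact hM1.conjTranspose_mul_mul_same S
    have := trace_mul_nonneg hX hpsd
    rw [Matrix.mul_sub, Matrix.trace_sub, mul_one] at this
    have := htr
    linarith [trace_mul_nonneg hX hpsd, htr]
  -- determinant identity
  have hSMXS : S * (M + X) * S = 1 + Sᴴ * X * S := by
    rw [hS.1, mul_add, add_mul, hSMS]
  have hdetMinv : M⁻¹.det * M.det = 1 := by
    rw [← Matrix.det_mul, Matrix.nonsing_inv_mul M (isUnit_iff_ne_zero.mpr hM.det_pos.ne'),
      Matrix.det_one]
  have hMX : (M + X).PosDef := hM.add_posSemidef hX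
  have hdetEq : (1 + Sᴴ * X * S).det * M.det = (M + X).det := by
    have h1 : (S * (M + X) * S).det = S.det * (M + X).det * S.det := by
      rw [Matrix.det_mul, Matrix.det_mul]
    have h2 : S.det * S.det * M.det = 1 := by
      rw [← Matrix.det_mul, hSS]; exact hdetMinv
    rw [hSMXS] at h1
    calc (1 + Sᴴ * X * S).det * M.det
        = (S.det * (M + X).det * S.det) * M.det := by rw [← h1]
      _ = (M + X).det * (S.det * S.det * M.det) := by ring
      _ = (M + X).det := by rw [h2, mul_one]
  have hgt : (1 + s) * M.det ≤ (M + X).det := by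
    rw [← hdetEq]
    have := det_one_add_ge hA
    rw [htr1] at this
    have hMd : 0 < M.det := hM.det_pos
    nlinarith
  have hlog : Real.log (1 + s) ≤ Real.log (M + X).det - Real.log M.det := by
    have h1 : Real.log ((1 + s) * M.det) ≤ Real.log (M + X).det := by
      exact Real.log_le_log (mul_pos (by linarith) hM.det_pos) hgt
    rw [Real.log_mul (by linarith) hM.det_pos.ne'] at h1
    linarith
  linarith [log_bound hs0 hs1]

lemma logdet_le {d : ℕ} (hd : 0 < d) {A : Matrix (Fin d) (Fin d) ℝ} (hA : A.PosDef) :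
    Real.log A.det ≤ d * Real.log (A.trace / d) := by
  have hdr : (0:ℝ) < d := Nat.cast_pos.mpr hd
  have hμ : ∀ i, 0 < hA.1.eigenvalues i := hA.eigenvalues_pos
  have hdet : A.det = ∏ i, hA.1.eigenvalues i := by
    rw [hA.isHermitian.det_eq_prod_eigenvalues]; norm_num
  have hlogdet : Real.log A.det = ∑ i, Real.log (hA.1.eigenvalues i) := by
    rw [hdet, Real.log_prod (fun i _ => (hμ i).ne')]
  have hjen := (strictConcaveOn_log_Ioi.concaveOn).le_map_sum
    (t := Finset.univ) (w := fun _ : Fin d => 1 / (d:ℝ)) (p := fun i => hA.1.eigenvalues i)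
    (fun i _ => by positivity)
    (by simp [Finset.sum_const]; field_simp)
    (fun i _ => Set.mem_Ioi.mpr (hμ i))
  simp only [smul_eq_mul, ← Finset.mul_sum] at hjen
  calc Real.log A.det = (d:ℝ) * ((1/d) * ∑ i, Real.log (hA.1.eigenvalues i)) := by
        rw [hlogdet]; field_simp
    _ ≤ (d:ℝ) * Real.log ((1/d) * ∑ i, hA.1.eigenvalues i) := by
        apply mul_le_mul_of_nonneg_left hjen hdr.le
    _ = (d:ℝ) * Real.log (A.trace / d) := by
        rw [trace_eq_sum_eig hA.isHermitian, one_div_mul_eq_div]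


/-- **elliptical potential lemma, Lemma F.1.** For symmetric positive
semidefinite matrices `X 0, …, X (T-1)` with trace at most 1, and the partial sums
`M t = I + ∑_{i < t} X i`, we have `∑_{t < T} tr (X t • (M t)⁻¹) ≤ 2 d log (1 + T/d)`. -/
theorem stmt12 (d T : ℕ) (X : ℕ → Matrix (Fin d) (Fin d) ℝ)
    (hX : ∀ t < T, (X t).PosSemidef) (htr : ∀ t < T, (X t).trace ≤ 1) :
    ∑ t ∈ Finset.range T,
        (X t * ((1 : Matrix (Fin d) (Fin d) ℝ) + ∑ i ∈ Finset.range t, X i)⁻¹).trace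
      ≤ 2 * d * Real.log (1 + T / d) := by
  rcases Nat.eq_zero_or_pos d with hd | hd
  · subst hd
    have hz : ∀ A : Matrix (Fin 0) (Fin 0) ℝ, A.trace = 0 := fun A => by
      simp [Matrix.trace]
    simp [hz]
  · set M : ℕ → Matrix (Fin d) (Fin d) ℝ :=
      fun t => 1 + ∑ i ∈ Finset.range t, X i with hMdef
    have hsum : ∀ t ≤ T, (∑ i ∈ Finset.range t, X i).PosSemidef := by
      intro t ht
      induction t with
      | zero => simpa using Matrix.PosSemidef.zero
      | succ n ih =>
        rw [Finset.sum_range_succ]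
        exact (ih (by omega)).add (hX n (by omega))
    have hMpd : ∀ t ≤ T, (M t).PosDef := fun t ht =>
      Matrix.PosDef.add_posSemidef Matrix.PosDef.one (hsum t ht)
    have hstep : ∀ t < T, (X t * (M t)⁻¹).trace ≤
        2 * (Real.log (M (t+1)).det - Real.log (M t).det) := by
      intro t ht
      have h1 : M (t+1) = M t + X t := by
        simp only [hMdef, Finset.sum_range_succ, ← add_assoc]
      have h2 : (M t - 1).PosSemidef := by
        have : M t - 1 = ∑ i ∈ Finset.range t, X i := by
          simp [hMdef]
        rw [this]; exact hsum t ht.le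
      have := step_lemma (hMpd t ht.le) h2 (hX t ht) (htr t ht)
      rwa [← h1] at this
    have hdr : (0:ℝ) < d := Nat.cast_pos.mpr hd
    calc ∑ t ∈ Finset.range T,
          (X t * ((1 : Matrix (Fin d) (Fin d) ℝ) + ∑ i ∈ Finset.range t, X i)⁻¹).trace
        ≤ ∑ t ∈ Finset.range T, 2 * (Real.log (M (t+1)).det - Real.log (M t).det) :=
          Finset.sum_le_sum (fun t ht' => hstep t (Finset.mem_range.mp ht'))
      _ = 2 * (Real.log (M T).det - Real.log (M 0).det) := by
          rw [← Finset.mul_sum, Finset.sum_range_sub (fun t => Real.log (M t).det)]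
      _ = 2 * Real.log (M T).det := by
          have h0 : M 0 = 1 := by simp [hMdef]
          rw [h0, Matrix.det_one, Real.log_one, sub_zero]
      _ ≤ 2 * ((d:ℝ) * Real.log ((M T).trace / d)) := by
          have := logdet_le hd (hMpd T le_rfl)
          linarith
      _ ≤ 2 * d * Real.log (1 + T / d) := by
          have htrge : (d:ℝ) ≤ (M T).trace := by
            have h1 : (M T).trace = d + ∑ i ∈ Finset.range T, (X i).trace := by
              simp [hMdef, Matrix.trace_add, Matrix.trace_sum, Matrix.trace_one]
            have h2 : 0 ≤ ∑ i ∈ Finset.range T, (X i).trace :=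
              Finset.sum_nonneg fun i hi =>
                psd_trace_nonneg (hX i (Finset.mem_range.mp hi))
            rw [h1]; linarith
          have htrle : (M T).trace ≤ d + T := by
            have h1 : (M T).trace = d + ∑ i ∈ Finset.range T, (X i).trace := by
              simp [hMdef, Matrix.trace_add, Matrix.trace_sum, Matrix.trace_one]
            have h2 : ∑ i ∈ Finset.range T, (X i).trace ≤ T := by
              calc ∑ i ∈ Finset.range T, (X i).trace
                  ≤ ∑ i ∈ Finset.range T, (1:ℝ) :=
                    Finset.sum_le_sum fun i hi => htr i (Finset.mem_range.mp hi)
                _ = T := by simp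
            rw [h1]; linarith
          have h1 : (M T).trace / d ≤ 1 + (T:ℝ)/d := by
            have he : (1 + (T:ℝ)/d) = ((d:ℝ) + T)/d := by field_simp
            rw [he]
            gcongr
          have h2 : Real.log ((M T).trace / d) ≤ Real.log (1 + (T:ℝ)/d) :=
            Real.log_le_log (div_pos (lt_of_lt_of_le hdr htrge) hdr) h1
          calc 2 * ((d:ℝ) * Real.log ((M T).trace / d))
              = 2 * (d:ℝ) * Real.log ((M T).trace / d) := by ring
            _ ≤ 2 * d * Real.log (1 + (T:ℝ)/d) :=
                mul_le_mul_of_nonneg_left h2 (by positivity)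
end

section
/- Let d ∈ ℕ and let M, X be d × d real symmetric matrices such that M − I_{d×d} is positive semidefinite and X is positive semidefinite with tr(X) ≤ 1. Then tr( X (M + X)^{−1} ) ≥ (1/2) tr( X M^{−1} ). -/
open Matrix

variable {n : Type*} [Fintype n] [DecidableEq n]

private lemma aux_trace_nonneg {A : Matrix n n ℝ} (hA : A.PosSemidef) : 0 ≤ A.trace := by
  refine Finset.sum_nonneg fun i _ => ?_
  simpa [dotProduct, Pi.single_apply] using hA.dotProduct_mulVec_nonneg (Pi.single i 1)

open scoped MatrixOrder in
private lemma aux_psd_eq {A : Matrix n n ℝ} (hA : A.PosSemidef) :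
    ∃ B : Matrix n n ℝ, A = Bᴴ * B := by
  obtain ⟨B, hB⟩ := CStarAlgebra.nonneg_iff_eq_star_mul_self.mp hA.nonneg
  exact ⟨B, hB⟩

private lemma aux_trace_mul_nonneg {A B : Matrix n n ℝ} (hA : A.PosSemidef)
    (hB : B.PosSemidef) : 0 ≤ (A * B).trace := by
  obtain ⟨C, hC⟩ := aux_psd_eq hA
  have h1 : (A * B).trace = (C * B * Cᴴ).trace := by
    rw [hC, Matrix.mul_assoc, Matrix.trace_mul_comm, Matrix.mul_assoc]
  rw [h1]
  exact aux_trace_nonneg (hB.mul_mul_conjTranspose_same C)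

private lemma aux_posdef_conj {S B : Matrix n n ℝ} (hB : B.PosDef) (hS : IsUnit S.det) :
    (Sᴴ * B * S).PosDef := by
  refine Matrix.PosDef.of_dotProduct_mulVec_pos (Matrix.isHermitian_conjTranspose_mul_mul S hB.1) fun x hx => ?_
  have hSx : S *ᵥ x ≠ 0 := by
    have hinj := (Matrix.mulVec_injective_iff_isUnit.mpr (Matrix.isUnit_iff_isUnit_det S |>.mpr hS))
    intro h
    exact hx (hinj (by simpa using h))
  have := hB.dotProduct_mulVec_pos hSx
  calc (0:ℝ) < star (S *ᵥ x) ⬝ᵥ B *ᵥ (S *ᵥ x) := this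
    _ = star x ⬝ᵥ (Sᴴ * B * S) *ᵥ x := by
        simp only [Matrix.dotProduct_mulVec, Matrix.star_mulVec, Matrix.vecMul_vecMul,
          Matrix.mul_assoc]

open scoped MatrixOrder in
private lemma aux_sqrt_facts {D : Matrix n n ℝ} (hD : D.PosDef) :
    ∃ T : Matrix n n ℝ, Tᴴ = T ∧ T * T = D⁻¹ ∧ IsUnit T.det ∧ T * D * T = 1 := by
  refine ⟨CFC.sqrt D⁻¹, (Matrix.nonneg_iff_posSemidef.mp (CFC.sqrt_nonneg D⁻¹)).isHermitian, 
    CFC.sqrt_mul_sqrt_self D⁻¹ hD.inv.posSemidef.nonneg, ?_, ?_⟩ <;>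
  · set T := CFC.sqrt D⁻¹ with hTdef
    have hT2 : T * T = D⁻¹ := CFC.sqrt_mul_sqrt_self D⁻¹ hD.inv.posSemidef.nonneg
    have hdet : IsUnit T.det := by
      have h : IsUnit (T.det * T.det) := by
        rw [← Matrix.det_mul, hT2]
        exact (Matrix.isUnit_iff_isUnit_det _).mp hD.inv.isUnit
      exact isUnit_of_mul_isUnit_left h
    first
      | exact hdet
      | · have h1 : T * D * T * T = T := by
            rw [Matrix.mul_assoc (T * D), hT2, Matrix.mul_assoc, Matrix.mul_nonsing_inv _ 
              ((Matrix.isUnit_iff_isUnit_det _).mp hD.isUnit), Matrix.mul_one]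
          calc T * D * T = T * D * T * (T * T⁻¹) := by
                rw [Matrix.mul_nonsing_inv _ hdet, Matrix.mul_one]
            _ = (T * D * T * T) * T⁻¹ := by simp only [Matrix.mul_assoc]
            _ = T * T⁻¹ := by rw [h1]
            _ = 1 := Matrix.mul_nonsing_inv _ hdet

/-- If `D` is positive definite and `D - 1` is PSD, then `1 - D⁻¹` is PSD. -/
private lemma aux_one_sub_inv {D : Matrix n n ℝ} (hD : D.PosDef)
    (h : (D - 1).PosSemidef) : ((1 : Matrix n n ℝ) - D⁻¹).PosSemidef := by
  obtain ⟨T, hTh, hT2, hTdet, hTDT⟩ := aux_sqrt_facts hD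
  have := h.conjTranspose_mul_mul_same T
  have expand : Tᴴ * (D - 1) * T = 1 - D⁻¹ := by
    rw [hTh, Matrix.mul_sub, Matrix.mul_one, Matrix.sub_mul, hTDT, hT2]
  rwa [expand] at this

/-- Loewner anti-monotonicity of the inverse. -/
private lemma aux_inv_antitone {A B : Matrix n n ℝ} (hA : A.PosDef) (hB : B.PosDef)
    (h : (B - A).PosSemidef) : (A⁻¹ - B⁻¹).PosSemidef := by
  obtain ⟨S, hSh, hS2, hSdet, hSAS⟩ := aux_sqrt_facts hA
  have h1 : (S * B * S - 1).PosSemidef := by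
    have := h.conjTranspose_mul_mul_same S
    have expand : Sᴴ * (B - A) * S = S * B * S - 1 := by
      rw [hSh, Matrix.mul_sub, Matrix.sub_mul, hSAS]
    rwa [expand] at this
  have h2 : (S * B * S).PosDef := by
    have := aux_posdef_conj hB hSdet
    rwa [hSh] at this
  have h3 : ((1 : Matrix n n ℝ) - (S * B * S)⁻¹).PosSemidef :=
    aux_one_sub_inv h2 (by simpa using h1)
  have h4 := h3.conjTranspose_mul_mul_same S
  have hSinv : S * S⁻¹ = 1 := Matrix.mul_nonsing_inv _ hSdet
  have hSinv' : S⁻¹ * S = 1 := Matrix.nonsing_inv_mul _ hSdet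
  have expand : Sᴴ * (1 - (S * B * S)⁻¹) * S = A⁻¹ - B⁻¹ := by
    rw [hSh, Matrix.mul_sub, Matrix.mul_one, Matrix.sub_mul, hS2,
      Matrix.mul_inv_rev, Matrix.mul_inv_rev]
    congr 1
    calc S * (S⁻¹ * (B⁻¹ * S⁻¹)) * S = (S * S⁻¹) * B⁻¹ * (S⁻¹ * S) := by
          simp only [Matrix.mul_assoc]
      _ = B⁻¹ := by rw [hSinv, hSinv', Matrix.one_mul, Matrix.mul_one]
  rwa [expand] at h4

/-- A PSD matrix with trace at most 1 satisfies `X ⪯ 1`. -/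
private lemma aux_one_sub_psd {X : Matrix n n ℝ} (hX : X.PosSemidef) (htr : X.trace ≤ 1) :
    ((1 : Matrix n n ℝ) - X).PosSemidef := by
  obtain ⟨C, hC⟩ := aux_psd_eq hX
  refine Matrix.PosSemidef.of_dotProduct_mulVec_nonneg ((Matrix.isHermitian_one).sub hX.1) fun x => ?_
  have hquad : star x ⬝ᵥ X *ᵥ x = ∑ i, (∑ j, C i j * x j) ^ 2 := by
    rw [hC, ← Matrix.mulVec_mulVec, Matrix.dotProduct_mulVec, ← Matrix.star_mulVec]
    simp [dotProduct, Matrix.mulVec, dotProduct, sq]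
  have htrX : X.trace = ∑ i, ∑ j, (C j i) ^ 2 := by
    rw [hC]
    simp [Matrix.trace, Matrix.diag, Matrix.mul_apply, sq]
  have hCS : ∀ i, (∑ j, C i j * x j) ^ 2 ≤ (∑ j, (C i j) ^ 2) * ∑ j, (x j) ^ 2 :=
    fun i => Finset.sum_mul_sq_le_sq_mul_sq Finset.univ _ _
  have hxx : star x ⬝ᵥ (1 : Matrix n n ℝ) *ᵥ x = ∑ j, (x j) ^ 2 := by
    simp [dotProduct, sq]
  have hsum : ∑ i, (∑ j, C i j * x j) ^ 2 ≤ X.trace * ∑ j, (x j) ^ 2 := by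
    calc ∑ i, (∑ j, C i j * x j) ^ 2 ≤ ∑ i, (∑ j, (C i j) ^ 2) * ∑ j, (x j) ^ 2 :=
          Finset.sum_le_sum fun i _ => hCS i
      _ = (∑ i, ∑ j, (C i j) ^ 2) * ∑ j, (x j) ^ 2 := by rw [Finset.sum_mul]
      _ = X.trace * ∑ j, (x j) ^ 2 := by rw [htrX, Finset.sum_comm]
  have hx2 : (0:ℝ) ≤ ∑ j, (x j) ^ 2 := Finset.sum_nonneg fun j _ => sq_nonneg _
  have : star x ⬝ᵥ X *ᵥ x ≤ ∑ j, (x j) ^ 2 := by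
    rw [hquad]
    calc ∑ i, (∑ j, C i j * x j) ^ 2 ≤ X.trace * ∑ j, (x j) ^ 2 := hsum
      _ ≤ 1 * ∑ j, (x j) ^ 2 := by nlinarith
      _ = ∑ j, (x j) ^ 2 := one_mul _
  have hexp : star x ⬝ᵥ ((1 : Matrix n n ℝ) - X) *ᵥ x
      = star x ⬝ᵥ (1 : Matrix n n ℝ) *ᵥ x - star x ⬝ᵥ X *ᵥ x := by
    rw [Matrix.sub_mulVec, dotProduct_sub]
  rw [hexp, hxx]
  linarith

/-- If `M - I` is positive semidefinite and `X` is positive semidefinite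
with `tr X ≤ 1`, then `tr (X (M + X)⁻¹) ≥ (1/2) tr (X M⁻¹)`. -/
theorem stmt13 (d : ℕ) (M X : Matrix (Fin d) (Fin d) ℝ)
    (hM : (M - 1).PosSemidef) (hX : X.PosSemidef) (htr : X.trace ≤ 1) :
    (1 / 2 : ℝ) * (X * M⁻¹).trace ≤ (X * (M + X)⁻¹).trace := by
  have hMpd : M.PosDef := by
    have := Matrix.PosDef.posSemidef_add hM Matrix.PosDef.one
    rwa [sub_add_cancel] at this
  have hMX : (M + X).PosDef := hMpd.add_posSemidef hX
  have hM1 : (M + 1).PosDef := hMpd.add_posSemidef Matrix.PosSemidef.one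
  have hMM : (M + M).PosDef := hMpd.add_posSemidef hMpd.posSemidef
  -- M + X ⪯ M + 1
  have s1 : ((M + X)⁻¹ - (M + 1)⁻¹).PosSemidef := by
    apply aux_inv_antitone hMX hM1
    have : (M + 1) - (M + X) = 1 - X := by abel
    rw [this]
    exact aux_one_sub_psd hX htr
  -- M + 1 ⪯ M + M
  have s2 : ((M + 1)⁻¹ - (M + M)⁻¹).PosSemidef := by
    apply aux_inv_antitone hM1 hMM
    have : (M + M) - (M + 1) = M - 1 := by abel
    rw [this]
    exact hM
  have s3 : ((M + X)⁻¹ - (M + M)⁻¹).PosSemidef := by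
    have := s1.add s2
    have h : ((M + X)⁻¹ - (M + 1)⁻¹) + ((M + 1)⁻¹ - (M + M)⁻¹)
        = (M + X)⁻¹ - (M + M)⁻¹ := by abel
    rwa [h] at this
  have key : 0 ≤ (X * ((M + X)⁻¹ - (M + M)⁻¹)).trace := aux_trace_mul_nonneg hX s3
  rw [Matrix.mul_sub, Matrix.trace_sub] at key
  -- (M + M)⁻¹ = (2⁻¹ : ℝ) • M⁻¹
  have hMMinv : (M + M)⁻¹ = (2⁻¹ : ℝ) • M⁻¹ := by
    apply Matrix.inv_eq_right_inv
    rw [Matrix.mul_smul, Matrix.add_mul, Matrix.mul_nonsing_inv _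
      ((Matrix.isUnit_iff_isUnit_det _).mp hMpd.isUnit)]
    rw [← two_smul ℝ (1 : Matrix (Fin d) (Fin d) ℝ), smul_smul]
    norm_num
  rw [hMMinv, Matrix.mul_smul, Matrix.trace_smul] at key
  rw [smul_eq_mul] at key
  linarith
end

section
/- Let d ∈ ℕ, T ∈ ℕ, β > 0, and let X_1, …, X_T be d × d real symmetric positive semidefinite matrices with tr(X_t) ≤ 1 for every t. Define M_0 = I_{d×d} and M_t = M_{t−1} + X_t. If tr( X_t M_{t−1}^{−1} ) ≥ β for every t = 1, …, T, then T ≤ (4d/β) log(1 + 4/β). -/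
open Matrix Finset

namespace Stmt14Aux

variable {n : Type*} [Fintype n] [DecidableEq n]

lemma trace_eq_sum_eigenvalues {A : Matrix n n ℝ} (hA : A.IsHermitian) :
    A.trace = ∑ i, hA.eigenvalues i := by
  nth_rewrite 1 [hA.spectral_theorem, Unitary.conjStarAlgAut_apply]
  rw [Matrix.trace_mul_cycle,
    Matrix.mem_unitaryGroup_iff'.mp hA.eigenvectorUnitary.2, Matrix.one_mul,
    Matrix.trace_diagonal]
  simp

lemma one_add_sum_le_prod {ι : Type*} (s : Finset ι) (f : ι → ℝ) (hf : ∀ i ∈ s, 0 ≤ f i) :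
    1 + ∑ i ∈ s, f i ≤ ∏ i ∈ s, (1 + f i) := by
  classical
  induction s using Finset.cons_induction with
  | empty => simp
  | cons a s ha ih =>
    rw [Finset.sum_cons, Finset.prod_cons]
    have h1 : 0 ≤ f a := hf a (Finset.mem_cons_self a s)
    have h2 : ∀ i ∈ s, 0 ≤ f i := fun i hi => hf i (Finset.mem_cons.mpr (Or.inr hi))
    have h3 := ih h2
    have h4 : 0 ≤ ∑ i ∈ s, f i := Finset.sum_nonneg h2
    nlinarith

lemma det_one_add {S : Matrix n n ℝ} (hS : S.PosSemidef) :
    1 + S.trace ≤ ((1 : Matrix n n ℝ) + S).det := by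
  set U : Matrix n n ℝ := (hS.1.eigenvectorUnitary : Matrix n n ℝ)
  have hU : U * star U = 1 := Matrix.mem_unitaryGroup_iff.mp hS.1.eigenvectorUnitary.2
  have hU' : star U * U = 1 := Matrix.mem_unitaryGroup_iff'.mp hS.1.eigenvectorUnitary.2
  have hdec : (1 : Matrix n n ℝ) + S
      = U * ((1 : Matrix n n ℝ) + diagonal (RCLike.ofReal ∘ hS.1.eigenvalues)) * star U := by
    rw [Matrix.mul_add, Matrix.add_mul, Matrix.mul_one, hU]
    congr 1
    exact hS.1.spectral_theorem
  have hdet : ((1 : Matrix n n ℝ) + S).det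
      = ((1 : Matrix n n ℝ) + diagonal (RCLike.ofReal ∘ hS.1.eigenvalues)).det := by
    rw [hdec, Matrix.det_mul, Matrix.det_mul, mul_comm, ← mul_assoc, ← Matrix.det_mul, hU']
    simp
  have hdiag : ((1 : Matrix n n ℝ) + diagonal (RCLike.ofReal ∘ hS.1.eigenvalues)).det
      = ∏ i, (1 + hS.1.eigenvalues i) := by
    rw [← Matrix.diagonal_one, Matrix.diagonal_add, Matrix.det_diagonal]
    simp
  rw [hdet, hdiag, trace_eq_sum_eigenvalues hS.1]
  exact one_add_sum_le_prod _ _ fun i _ => hS.eigenvalues_nonneg i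

open scoped MatrixOrder in
lemma det_add_le {M X : Matrix n n ℝ} (hM : M.PosDef) (hX : X.PosSemidef) :
    M.det * (1 + (X * M⁻¹).trace) ≤ (M + X).det := by
  set A : Matrix n n ℝ := CFC.sqrt M with hAdef
  have hApsd : A.PosSemidef := (CFC.sqrt_nonneg M).posSemidef
  have hAA : A * A = M := CFC.sqrt_mul_sqrt_self M hM.posSemidef.nonneg
  have hdetA : A.det * A.det = M.det := by rw [← Matrix.det_mul, hAA]
  have hne : A.det ≠ 0 := by
    intro h0
    rw [h0, mul_zero] at hdetA
    exact hM.det_pos.ne' hdetA.symm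
  have hunit : IsUnit A.det := (isUnit_iff_ne_zero).mpr hne
  have hAinv : A * A⁻¹ = 1 := Matrix.mul_nonsing_inv A hunit
  have hinvA : A⁻¹ * A = 1 := Matrix.nonsing_inv_mul A hunit
  have hAherm : Aᴴ = A := hApsd.1
  have hAinvherm : (A⁻¹)ᴴ = A⁻¹ := by rw [Matrix.conjTranspose_nonsing_inv, hAherm]
  set S : Matrix n n ℝ := A⁻¹ * X * A⁻¹ with hSdef
  have hSpsd : S.PosSemidef := by
    have := hX.conjTranspose_mul_mul_same (A⁻¹)
    rwa [hAinvherm] at this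
  have hMX : M + X = A * ((1 : Matrix n n ℝ) + S) * A := by
    rw [Matrix.mul_add, Matrix.add_mul, Matrix.mul_one, hAA, hSdef]
    congr 1
    symm
    calc A * (A⁻¹ * X * A⁻¹) * A = A * A⁻¹ * (X * (A⁻¹ * A)) := by
          simp only [Matrix.mul_assoc]
      _ = X := by rw [hAinv, hinvA, Matrix.one_mul, Matrix.mul_one]
  have htrS : S.trace = (X * M⁻¹).trace := by
    rw [hSdef, Matrix.mul_assoc, ← Matrix.trace_mul_cycle', ← Matrix.mul_inv_rev, hAA]
  have hdet : (M + X).det = M.det * ((1 : Matrix n n ℝ) + S).det := by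
    rw [hMX, Matrix.det_mul, Matrix.det_mul, mul_comm, ← mul_assoc, hdetA]
  rw [hdet, ← htrS]
  exact mul_le_mul_of_nonneg_left (det_one_add hSpsd) hM.det_pos.le

lemma amgm {d : ℕ} (hd : 0 < d) (f : Fin d → ℝ) (hf : ∀ i, 0 ≤ f i) :
    ∏ i, f i ≤ ((∑ i, f i) / d) ^ d := by
  have hdR : (0:ℝ) < d := by exact_mod_cast hd
  have h := Real.geom_mean_le_arith_mean_weighted Finset.univ (fun _ => (d:ℝ)⁻¹) f
      (fun _ _ => by positivity)
      (by simp [Finset.card_univ]; field_simp) (fun i _ => hf i)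
  have h2 : (∏ i, f i ^ ((d:ℝ)⁻¹)) ^ d ≤ (∑ i, (d:ℝ)⁻¹ * f i) ^ d :=
    pow_le_pow_left₀ (Finset.prod_nonneg fun i _ => Real.rpow_nonneg (hf i) _) h d
  have h3 : (∏ i, f i ^ ((d:ℝ)⁻¹)) ^ d = ∏ i, f i := by
    rw [← Finset.prod_pow]
    refine Finset.prod_congr rfl fun i _ => ?_
    rw [← Real.rpow_natCast (f i ^ ((d:ℝ)⁻¹)) d, ← Real.rpow_mul (hf i),
      inv_mul_cancel₀ hdR.ne', Real.rpow_one]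
  have h4 : (∑ i, (d:ℝ)⁻¹ * f i) = (∑ i, f i) / d := by
    rw [← Finset.mul_sum]; ring
  rw [h3, h4] at h2
  exact h2

lemma det_le_pow {d : ℕ} (hd : 0 < d) {M : Matrix (Fin d) (Fin d) ℝ} (hM : M.PosSemidef) :
    M.det ≤ (M.trace / d) ^ d := by
  have h1 : M.det = ∏ i, hM.1.eigenvalues i := hM.1.det_eq_prod_eigenvalues
  rw [h1, trace_eq_sum_eigenvalues hM.1]
  exact amgm hd _ hM.eigenvalues_nonneg

lemma numeric {β u : ℝ} (hβ : 0 < β) (hu : 0 < u) (h : u * β ≤ 2 * Real.log (1 + u)) :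
    u ≤ 4 / β * Real.log (1 + 4 / β) := by
  have hlog : ∀ x : ℝ, 0 ≤ x → Real.log (1 + x) ≤ x := fun x hx => by
    have := Real.log_le_sub_one_of_pos (by linarith : (0:ℝ) < 1 + x); linarith
  have hs : 0 ≤ Real.sqrt u := Real.sqrt_nonneg u
  have hsq : Real.sqrt u * Real.sqrt u = u := Real.mul_self_sqrt hu.le
  have hspos : 0 < Real.sqrt u := Real.sqrt_pos.mpr hu
  have h1 : Real.log (1 + u) ≤ 2 * Real.sqrt u := by
    have hle : 1 + u ≤ (1 + Real.sqrt u) ^ 2 := by nlinarith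
    calc Real.log (1 + u) ≤ Real.log ((1 + Real.sqrt u) ^ 2) :=
          Real.log_le_log (by linarith) hle
      _ = 2 * Real.log (1 + Real.sqrt u) := by
          rw [Real.log_pow]; push_cast; ring
      _ ≤ 2 * Real.sqrt u := by nlinarith [hlog _ hs]
  have h2 : Real.sqrt u ≤ 4 / β := by
    rw [le_div_iff₀ hβ]
    nlinarith
  have hu16 : u ≤ 16 / β ^ 2 := by
    have h16 : (16:ℝ) / β ^ 2 = (4 / β) * (4 / β) := by field_simp; ring
    rw [← hsq, h16]
    exact mul_le_mul h2 h2 hs (by positivity)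
  have h3 : 1 + 16 / β ^ 2 ≤ (1 + 4 / β) ^ 2 := by
    have hb : (0:ℝ) ≤ 4 / β := by positivity
    have hb2 : (16:ℝ) / β ^ 2 = (4 / β) ^ 2 := by rw [div_pow]; norm_num
    rw [hb2]
    nlinarith
  have h4 : Real.log (1 + u) ≤ 2 * Real.log (1 + 4 / β) := by
    calc Real.log (1 + u) ≤ Real.log ((1 + 4 / β) ^ 2) :=
          Real.log_le_log (by linarith) (by nlinarith)
      _ = 2 * Real.log (1 + 4 / β) := by rw [Real.log_pow]; push_cast; ring
  rw [div_mul_eq_mul_div, le_div_iff₀ hβ]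
  nlinarith

end Stmt14Aux

/-- **iteration complexity of the elliptical planner.** For symmetric positive
semidefinite matrices `X 0, …, X (T-1)` with trace at most 1, and partial sums
`M t = I + ∑_{i < t} X i`, if `tr (X t * (M t)⁻¹) ≥ β` for every `t < T`, then
`T ≤ (4d/β) log (1 + 4/β)`. -/
theorem stmt14 (d T : ℕ) (β : ℝ) (hβ : 0 < β) (X : ℕ → Matrix (Fin d) (Fin d) ℝ)
    (hX : ∀ t < T, (X t).PosSemidef) (htr : ∀ t < T, (X t).trace ≤ 1)
    (hlb : ∀ t < T,
      β ≤ (X t * ((1 : Matrix (Fin d) (Fin d) ℝ) + ∑ i ∈ Finset.range t, X i)⁻¹).trace) :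
    (T : ℝ) ≤ 4 * d / β * Real.log (1 + 4 / β) := by
  have hlognn : (0:ℝ) ≤ Real.log (1 + 4 / β) :=
    Real.log_nonneg (by nlinarith [div_nonneg (by norm_num : (0:ℝ) ≤ 4) hβ.le])
  rcases Nat.eq_zero_or_pos T with hT0 | hTpos
  · subst hT0
    simp only [Nat.cast_zero]
    exact mul_nonneg (by positivity) hlognn
  rcases Nat.eq_zero_or_pos d with hd0 | hdpos
  · exfalso
    subst hd0
    have h0 := hlb 0 hTpos
    have hz : ((X 0) * ((1 : Matrix (Fin 0) (Fin 0) ℝ)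
        + ∑ i ∈ Finset.range 0, X i)⁻¹).trace = 0 := by
      simp [Matrix.trace]
    rw [hz] at h0
    linarith
  set M : ℕ → Matrix (Fin d) (Fin d) ℝ := fun t => 1 + ∑ i ∈ Finset.range t, X i with hMdef
  have hsum : ∀ t ≤ T, (∑ i ∈ Finset.range t, X i).PosSemidef := by
    intro t ht
    induction t with
    | zero => simpa using Matrix.PosSemidef.zero
    | succ s ih =>
      rw [Finset.sum_range_succ]
      exact (ih (by omega)).add (hX s (by omega))
  have hMpd : ∀ t ≤ T, (M t).PosDef :=
    fun t ht => Matrix.PosDef.one.add_posSemidef (hsum t ht)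
  have hβ1 : β ≤ 1 := by
    have h0 := hlb 0 hTpos
    simp only [Finset.range_zero, Finset.sum_empty, add_zero, inv_one,
      Matrix.mul_one] at h0
    exact h0.trans (htr 0 hTpos)
  have key : ∀ t, t ≤ T → (1 + β) ^ t ≤ (M t).det := by
    intro t
    induction t with
    | zero => intro _; simp [hMdef]
    | succ t ih =>
      intro ht
      have ht' : t ≤ T := by omega
      have htT : t < T := by omega
      have h1 : M (t + 1) = M t + X t := by
        simp only [hMdef]
        rw [Finset.sum_range_succ, add_assoc]
      have h2 := Stmt14Aux.det_add_le (hMpd t ht') (hX t htT)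
      have h3 := hlb t htT
      have hdetpos := (hMpd t ht').det_pos
      calc (1 + β) ^ (t + 1) = (1 + β) ^ t * (1 + β) := pow_succ _ _
        _ ≤ (M t).det * (1 + (X t * (M t)⁻¹).trace) :=
            mul_le_mul (ih ht') (by linarith) (by positivity) hdetpos.le
        _ ≤ (M t + X t).det := h2
        _ = (M (t + 1)).det := by rw [h1]
  have hdR : (0:ℝ) < d := by exact_mod_cast hdpos
  have hTR : (0:ℝ) < T := by exact_mod_cast hTpos
  have htrM : (M T).trace ≤ (d:ℝ) + T := by
    have h1 : (M T).trace = (d:ℝ) + ∑ i ∈ Finset.range T, (X i).trace := by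
      simp [hMdef, Matrix.trace_add, Matrix.trace_sum, Matrix.trace_one]
    rw [h1]
    have h2 : ∑ i ∈ Finset.range T, (X i).trace ≤ ∑ i ∈ Finset.range T, (1:ℝ) :=
      Finset.sum_le_sum fun i hi => htr i (Finset.mem_range.mp hi)
    simp only [Finset.sum_const, Finset.card_range, nsmul_eq_mul, mul_one] at h2
    linarith
  have htrMnn : 0 ≤ (M T).trace := by
    rw [Stmt14Aux.trace_eq_sum_eigenvalues (hMpd T le_rfl).posSemidef.1]
    exact Finset.sum_nonneg fun i _ => (hMpd T le_rfl).posSemidef.eigenvalues_nonneg i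
  have hdet_le : (M T).det ≤ (((d:ℝ) + T) / d) ^ d := by
    calc (M T).det ≤ ((M T).trace / d) ^ d :=
          Stmt14Aux.det_le_pow hdpos (hMpd T le_rfl).posSemidef
      _ ≤ (((d:ℝ) + T) / d) ^ d := by
          apply pow_le_pow_left₀ (div_nonneg htrMnn hdR.le)
          gcongr
  have hfin : (1 + β) ^ T ≤ (((d:ℝ) + T) / d) ^ d := le_trans (key T le_rfl) hdet_le
  have hlogineq : (T:ℝ) * Real.log (1 + β) ≤ (d:ℝ) * Real.log (((d:ℝ) + T) / d) := by
    have h1 : Real.log ((1 + β) ^ T) ≤ Real.log ((((d:ℝ) + T) / d) ^ d) :=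
      Real.log_le_log (by positivity) hfin
    rwa [Real.log_pow, Real.log_pow] at h1
  have hhalf : β / 2 ≤ Real.log (1 + β) := by
    have h := Real.log_le_sub_one_of_pos (show (0:ℝ) < (1 + β)⁻¹ by positivity)
    rw [Real.log_inv] at h
    have hinv : (1 + β)⁻¹ * (1 + β) = 1 := inv_mul_cancel₀ (by linarith)
    nlinarith
  have hlogarg : ((d:ℝ) + T) / d = 1 + (T:ℝ) / d := by field_simp
  have hu : (T:ℝ) / d * β ≤ 2 * Real.log (1 + (T:ℝ) / d) := by
    rw [← hlogarg, div_mul_eq_mul_div, div_le_iff₀ hdR]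
    nlinarith [mul_le_mul_of_nonneg_left hhalf hTR.le, hlogineq]
  have hnum := Stmt14Aux.numeric hβ (div_pos hTR hdR) hu
  have hfinal : (T:ℝ) / d * (d:ℝ) ≤ (4 / β * Real.log (1 + 4 / β)) * d :=
    mul_le_mul_of_nonneg_right hnum hdR.le
  rw [div_mul_cancel₀ _ hdR.ne'] at hfinal
  have hring : 4 * (d:ℝ) / β * Real.log (1 + 4 / β)
      = (4 / β * Real.log (1 + 4 / β)) * d := by ring
  linarith
end

section
/- Let d ∈ ℕ and let M, N be d × d real symmetric positive definite matrices. Then log det(M) ≤ log det(N) + tr( N^{−1} (M − N) ). -/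
open Matrix Finset
open scoped MatrixOrder

lemma trace_eq_sum_eigenvalues' {n : Type*} [Fintype n] [DecidableEq n]
    {A : Matrix n n ℝ} (hA : A.IsHermitian) :
    A.trace = ∑ i, hA.eigenvalues i := by
  nth_rewrite 1 [hA.spectral_theorem]
  rw [Unitary.conjStarAlgAut_apply]
  rw [Matrix.trace_mul_cycle,
    show star (hA.eigenvectorUnitary : Matrix n n ℝ) * hA.eigenvectorUnitary = 1 from
      Matrix.mem_unitaryGroup_iff'.mp hA.eigenvectorUnitary.2, Matrix.one_mul,
    Matrix.trace_diagonal]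
  simp

/-- For a positive definite matrix `A`, `log det A ≤ trace A - d`. -/
lemma log_det_le_trace_sub {d : ℕ} {A : Matrix (Fin d) (Fin d) ℝ} (hA : A.PosDef) :
    Real.log A.det ≤ A.trace - d := by
  have hdet : A.det = ∏ i, hA.1.eigenvalues i := by
    simpa using hA.1.det_eq_prod_eigenvalues
  rw [hdet, Real.log_prod (fun i _ => (hA.eigenvalues_pos i).ne'),
    trace_eq_sum_eigenvalues' hA.1]
  calc ∑ i, Real.log (hA.1.eigenvalues i) ≤ ∑ i, (hA.1.eigenvalues i - 1) :=
        Finset.sum_le_sum fun i _ => Real.log_le_sub_one_of_pos (hA.eigenvalues_pos i)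
    _ = (∑ i, hA.1.eigenvalues i) - d := by rw [Finset.sum_sub_distrib]; simp

/-- **first-order concavity of `log det`.** For symmetric positive definite
matrices `M, N`, `log det M ≤ log det N + tr (N⁻¹ (M - N))`. -/
theorem stmt15 (d : ℕ) (M N : Matrix (Fin d) (Fin d) ℝ)
    (hM : M.PosDef) (hN : N.PosDef) :
    Real.log M.det ≤ Real.log N.det + (N⁻¹ * (M - N)).trace := by
  have hNinv : (N⁻¹).PosDef := hN.inv
  haveI := hN.isUnit.invertible
  set S := CFC.sqrt (N⁻¹) with hS
  have hSsd : S.PosSemidef := Matrix.nonneg_iff_posSemidef.mp (CFC.sqrt_nonneg _)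
  have hSS : S * S = N⁻¹ := CFC.sqrt_mul_sqrt_self _ hNinv.posSemidef.nonneg
  have hSdet : S.det * S.det = N⁻¹.det := by rw [← Matrix.det_mul, hSS]
  have hSdet_nonneg : 0 ≤ S.det := by
    have h := hSsd.1.det_eq_prod_eigenvalues
    simp only [RCLike.ofReal_real_eq_id, id] at h
    rw [show (∏ i, ((hSsd.1.eigenvalues i : ℝ))) = ∏ i, hSsd.1.eigenvalues i by simp] at h
    rw [h]
    exact Finset.prod_nonneg fun i _ => hSsd.eigenvalues_nonneg i
  have hSdet_pos : 0 < S.det := by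
    rcases hSdet_nonneg.lt_or_eq with h | h
    · exact h
    · exfalso
      have h1 : 0 < N⁻¹.det := hNinv.det_pos
      rw [← hSdet, ← h] at h1; simp at h1
  have hSunit : IsUnit S := (Matrix.isUnit_iff_isUnit_det S).mpr hSdet_pos.ne'.isUnit
  -- A = S * M * S is positive definite
  have hA : (S * M * S).PosDef := by
    refine Matrix.PosDef.of_dotProduct_mulVec_pos ?_ fun x hx => ?_
    · have := (hM.posSemidef.mul_mul_conjTranspose_same S).1
      rwa [hSsd.1] at this
    · have hne : S *ᵥ x ≠ 0 := by
        intro h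
        exact hx (Matrix.mulVec_injective_iff_isUnit.mpr hSunit (by simpa using h))
      have h2 := hM.dotProduct_mulVec_pos hne
      nth_rewrite 1 [show S * M * S = Sᴴ * M * S by rw [hSsd.1]]
      simpa only [star_mulVec, dotProduct_mulVec, vecMul_vecMul] using h2
  have key := log_det_le_trace_sub hA
  have hdet : (S * M * S).det = N⁻¹.det * M.det := by
    rw [Matrix.det_mul, Matrix.det_mul, ← hSdet]; ring
  have htr : (S * M * S).trace = (N⁻¹ * M).trace := by
    rw [Matrix.trace_mul_cycle, hSS]
  have hdetinv : N⁻¹.det = (N.det)⁻¹ := by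
    rw [Matrix.det_nonsing_inv, Ring.inverse_eq_inv']
  rw [hdet, htr, Real.log_mul (hNinv.det_pos.ne') (hM.det_pos.ne'),
    hdetinv, Real.log_inv] at key
  have htrsub : (N⁻¹ * (M - N)).trace = (N⁻¹ * M).trace - d := by
    rw [Matrix.mul_sub, Matrix.nonsing_inv_mul N hN.det_pos.ne'.isUnit]
    · simp [Matrix.trace_sub]
  rw [htrsub]
  linarith
end
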